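/- arXiv:2110.13678 — 2 statements merged into one kernel-verified Lean document; each statement's English description precedes it below -/
import Mathlib

section
/- Let (Ω, 𝒢, P) be a probability space, T ∈ (0,∞], I a set, and (𝒜, (𝔽^A)_{A∈𝒜}) an index system on I with filtrations of sub-σ-algebras of 𝒢. Let δ = (δ^A)_{A∈𝒜} be a family of information delays, each δ^A an information delay for 𝔽^A, with recursively defined δ-delayed filtrations (𝓕^{A,δ}_t). Let Q be a probability measure on (Ω, 𝒢) and (S^a)_{a∈I} a family of real-valued processes with S^a_t ∈ L¹(Q) for every a ∈ I and t ∈ [0,T]. If Q is a martingale measure for the undelayed filtrations, i.e. for every A ∈ 𝒜, every a ∈ A and all 0 ≤ t ≤ u ≤ T, E_Q[S^a_u | 𝓕^A_t] = E_Q[S^a_t | 𝓕^A_t] Q-a.s., then Q is a martingale measure for the delayed filtrations: for every A ∈ 𝒜, every a ∈ A and all 0 ≤ t ≤ u ≤ T, E_Q[S^a_u | 𝓕^{A,δ}_t] = E_Q[S^a_t | 𝓕^{A,δ}_t] Q-a.s. -/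
open MeasureTheory Set Filter
open scoped ENNReal NNReal

noncomputable section

/-- The σ-field of the `τ`-past: generated by the sets `A` such that `A ∩ {τ ≤ s}` is
`F s`-measurable for every time `s` in the time domain `D` of the filtration `F`.
(When `τ` is a stopping time this family is itself a σ-algebra.) -/
def pastSigma {Ω ι : Type*} [Preorder ι] (F : ι → MeasurableSpace Ω) (D : Set ι)
    (τ : Ω → ι) : MeasurableSpace Ω :=
  MeasurableSpace.generateFrom {A | ∀ s ∈ D, MeasurableSet[F s] (A ∩ {ω | τ ω ≤ s})}

/-- An information delay for the filtration `F = (F t)_{t ∈ [0,T]}`: each `δ t` is an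
`F`-stopping time, `0 ≤ δ t ω ≤ t`, and `δ` is pathwise monotone. -/
def IsInformationDelay {Ω : Type*} (F : ℝ≥0∞ → MeasurableSpace Ω) (T : ℝ≥0∞)
    (δ : ℝ≥0∞ → Ω → ℝ≥0∞) : Prop :=
  (∀ t ≤ T, ∀ s ≤ T, MeasurableSet[F s] {ω | δ t ω ≤ s}) ∧
  (∀ t ≤ T, ∀ ω, δ t ω ≤ t) ∧
  (∀ t u : ℝ≥0∞, t ≤ u → u ≤ T → ∀ ω, δ t ω ≤ δ u ω)

/-- The recursively defined `δ`-delayed filtrations: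
`𝓕^{A,δ}_t = σ(𝓕^A_{δ^A(t)} ∪ ⋃ {𝓕^{A',δ}_t : A' ∈ 𝒜, A' ⊊ A})`. -/
def delayedFiltration {Ω I : Type*} (F : Finset I → ℝ≥0∞ → MeasurableSpace Ω)
    (T : ℝ≥0∞) (𝒜 : Set (Finset I)) (δ : Finset I → ℝ≥0∞ → Ω → ℝ≥0∞)
    (A : Finset I) (t : ℝ≥0∞) : MeasurableSpace Ω :=
  pastSigma (F A) (Set.Iic T) (δ A t) ⊔
    ⨆ (A' : Finset I) (_ : A' ∈ 𝒜) (_ : A' ⊂ A), delayedFiltration F T 𝒜 δ A' t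
termination_by A.card
decreasing_by exact Finset.card_lt_card ‹A' ⊂ A›

/-! A delay never reveals more than the undelayed information, so each
delayed filtration is coarser than the undelayed one, and the tower property transports the
martingale identity from the finer to the coarser σ-algebra. -/

lemma pastSigma_le_of_le {Ω ι : Type*} [Preorder ι] {F : ι → MeasurableSpace Ω} {D : Set ι}
    {τ : Ω → ι} {t : ι} (ht : t ∈ D) (hτ : ∀ ω, τ ω ≤ t) : pastSigma F D τ ≤ F t := by
  refine MeasurableSpace.generateFrom_le fun B hB => ?_
  have hBt := hB t ht
  rwa [inter_eq_self_of_subset_left (t := {ω | τ ω ≤ t}) fun ω _ => hτ ω] at hBt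

lemma delayedFiltration_le {Ω I : Type*} {F : Finset I → ℝ≥0∞ → MeasurableSpace Ω}
    {T : ℝ≥0∞} {𝒜 : Set (Finset I)} {δ : Finset I → ℝ≥0∞ → Ω → ℝ≥0∞}
    (hFmono : ∀ A ∈ 𝒜, ∀ A' ∈ 𝒜, A ⊆ A' → ∀ t ≤ T, F A t ≤ F A' t)
    (hδ : ∀ A ∈ 𝒜, ∀ t ≤ T, ∀ ω, δ A t ω ≤ t) :
    ∀ A ∈ 𝒜, ∀ t ≤ T, delayedFiltration F T 𝒜 δ A t ≤ F A t := by
  intro A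
  induction A using Finset.strongInduction with
  | _ A ih =>
    intro hA t ht
    rw [delayedFiltration]
    refine sup_le (pastSigma_le_of_le (mem_Iic.mpr ht) (hδ A hA t ht)) ?_
    refine iSup₂_le fun A' hA' => iSup_le fun hA'A => ?_
    exact (ih A' hA'A hA' t ht).trans (hFmono A' hA' A hA hA'A.subset t ht)

lemma condExp_ae_eq_of_le_of_condExp_ae_eq {Ω : Type*} {m₁ m₂ m : MeasurableSpace Ω}
    {μ : Measure Ω} [IsFiniteMeasure μ] {f g : Ω → ℝ} (h₁₂ : m₁ ≤ m₂) (h₂ : m₂ ≤ m)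
    (hfg : μ[f | m₂] =ᵐ[μ] μ[g | m₂]) : μ[f | m₁] =ᵐ[μ] μ[g | m₁] :=
  calc μ[f | m₁] =ᵐ[μ] μ[μ[f | m₂] | m₁] := (condExp_condExp_of_le h₁₂ h₂).symm
    _ =ᵐ[μ] μ[μ[g | m₂] | m₁] := condExp_congr_ae hfg
    _ =ᵐ[μ] μ[g | m₁] := condExp_condExp_of_le h₁₂ h₂

theorem martingaleMeasure_delayedFiltration_general
    {Ω I : Type*} [m𝒢 : MeasurableSpace Ω]
    (T : ℝ≥0∞)
    (𝒜 : Set (Finset I))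
    (F : Finset I → ℝ≥0∞ → MeasurableSpace Ω)
    (hFle : ∀ A ∈ 𝒜, ∀ t ≤ T, F A t ≤ m𝒢)
    (hFmono : ∀ A ∈ 𝒜, ∀ A' ∈ 𝒜, A ⊆ A' → ∀ t ≤ T, F A t ≤ F A' t)
    (δ : Finset I → ℝ≥0∞ → Ω → ℝ≥0∞)
    (hδ : ∀ A ∈ 𝒜, IsInformationDelay (F A) T (δ A))
    (Q : Measure Ω) [IsProbabilityMeasure Q]
    (S : I → ℝ≥0∞ → Ω → ℝ)
    (hmart : ∀ A ∈ 𝒜, ∀ a ∈ A, ∀ t u : ℝ≥0∞, t ≤ u → u ≤ T →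
      Q[S a u | F A t] =ᵐ[Q] Q[S a t | F A t]) :
    ∀ A ∈ 𝒜, ∀ a ∈ A, ∀ t u : ℝ≥0∞, t ≤ u → u ≤ T →
      Q[S a u | delayedFiltration F T 𝒜 δ A t] =ᵐ[Q]
        Q[S a t | delayedFiltration F T 𝒜 δ A t] := by
  intro A hA a ha t u htu huT
  have htT : t ≤ T := htu.trans huT
  have hdelay : delayedFiltration F T 𝒜 δ A t ≤ F A t :=
    delayedFiltration_le hFmono (fun A hA => (hδ A hA).2.1) A hA t htT
  exact condExp_ae_eq_of_le_of_condExp_ae_eq hdelay (hFle A hA t htT)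
    (hmart A hA a ha t u htu huT)

/-- A martingale measure for the undelayed filtrations is a martingale
measure for the `δ`-delayed filtrations. -/
theorem martingaleMeasure_delayedFiltration
    {Ω I : Type*} [DecidableEq I] [m𝒢 : MeasurableSpace Ω]
    (P : Measure Ω) [IsProbabilityMeasure P]
    (T : ℝ≥0∞) (hT : 0 < T)
    (𝒜 : Set (Finset I)) (h𝒜 : ∀ A₁ ∈ 𝒜, ∀ A₂ ∈ 𝒜, A₁ ∪ A₂ ∈ 𝒜)
    (F : Finset I → ℝ≥0∞ → MeasurableSpace Ω)
    (hFfilt : ∀ A ∈ 𝒜, ∀ s t : ℝ≥0∞, s ≤ t → t ≤ T → F A s ≤ F A t)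
    (hFle : ∀ A ∈ 𝒜, ∀ t ≤ T, F A t ≤ m𝒢)
    (hFmono : ∀ A ∈ 𝒜, ∀ A' ∈ 𝒜, A ⊆ A' → ∀ t ≤ T, F A t ≤ F A' t)
    (δ : Finset I → ℝ≥0∞ → Ω → ℝ≥0∞)
    (hδ : ∀ A ∈ 𝒜, IsInformationDelay (F A) T (δ A))
    (Q : Measure Ω) [IsProbabilityMeasure Q]
    (S : I → ℝ≥0∞ → Ω → ℝ)
    (hSint : ∀ a, ∀ t ≤ T, Integrable (S a t) Q)
    (hmart : ∀ A ∈ 𝒜, ∀ a ∈ A, ∀ t u : ℝ≥0∞, t ≤ u → u ≤ T →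
      Q[S a u | F A t] =ᵐ[Q] Q[S a t | F A t]) :
    ∀ A ∈ 𝒜, ∀ a ∈ A, ∀ t u : ℝ≥0∞, t ≤ u → u ≤ T →
      Q[S a u | delayedFiltration F T 𝒜 δ A t] =ᵐ[Q]
        Q[S a t | delayedFiltration F T 𝒜 δ A t] :=
  martingaleMeasure_delayedFiltration_general (m𝒢 := m𝒢) T 𝒜 F hFle hFmono δ hδ Q S hmart
end
end

section
/- Let 𝔽 = (𝓕_t)_{t∈ℝ₊} be a right-continuous filtration (𝓕_t = ⋂_{u>t} 𝓕_u) of sub-σ-algebras of 𝒢 on a probability space (Ω, 𝒢, P), and let T ∈ (0,∞). Let π = (π(s))_{s∈[0,T]} be an order execution delay for 𝔽 (each π(s) an 𝔽-stopping time, s ≤ π(s,ω) for all s, ω, and π(s,ω) ≤ π(u,ω) for s ≤ u) that is pathwise continuous. Define the time-changed filtration 𝓕̃_s := 𝓕_{π(s)} (the σ-field of the π(s)-past) for s ∈ [0,T], and δ(t,ω) := min( inf{s ∈ [0,T] : π(s,ω) ≥ t}, T ) for t ∈ [0,T]. Then δ is an information delay for 𝔽̃ = (𝓕̃_s)_{s∈[0,T]}: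 for every t ∈ [0,T], {δ(t) ≤ s} ∈ 𝓕̃_s for all s ∈ [0,T], 0 ≤ δ(t,ω) ≤ t for all ω, and δ(t,ω) ≤ δ(u,ω) whenever t ≤ u. -/
/-!
The time change `δ(t)` is the first time the continuous, nondecreasing path `s ↦ π(s, ω)`
reaches level `t`. Continuity makes the hitting set closed, so it contains its infimum, and
therefore `δ(t) ≤ s ↔ t ≤ π(s)`. The event `{t ≤ π(s)}` belongs to the `π(s)`-past because
`{t ≤ π(s)} ∩ {π(s) ≤ u} = {π(s) ≤ u} \ {π(s) < t}` and `{π(s) < t}` is a countable union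
of the events `{π(s) ≤ q}` over rationals `q < t`.
-/

open MeasureTheory Set
open scoped NNReal

noncomputable section

section FirstPassage

variable {α β : Type*} [ConditionallyCompleteLinearOrderBot α] [Preorder β]

/-- If `f` never reaches `t` on `[⊥, T]`, the infimum is over the empty set and the value is
`⊥`, not `T`. -/
def firstPassage (f : α → β) (T : α) (t : β) : α :=
  min (sInf {s | s ≤ T ∧ t ≤ f s}) T

theorem firstPassage_le_of_le_apply {f : α → β} {T s : α} {t : β} (hs : s ≤ T)
    (hts : t ≤ f s) : firstPassage f T t ≤ s :=
  min_le_of_left_le (csInf_le (OrderBot.bddBelow _) ⟨hs, hts⟩)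

theorem firstPassage_mono {f : α → β} {T : α} {t u : β} (htu : t ≤ u) (hu : u ≤ f T) :
    firstPassage f T t ≤ firstPassage f T u :=
  min_le_min_right T <| csInf_le_csInf (OrderBot.bddBelow _) ⟨T, le_rfl, hu⟩
    fun _ ⟨hs, hus⟩ => ⟨hs, htu.trans hus⟩

theorem firstPassage_le_iff [TopologicalSpace α] [OrderTopology α] [TopologicalSpace β]
    [ClosedIciTopology β] {f : α → β} {T s : α} {t : β} (hcont : ContinuousOn f (Iic T))
    (hmono : MonotoneOn f (Iic T)) (ht : t ≤ f T) (hs : s ≤ T) :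
    firstPassage f T t ≤ s ↔ t ≤ f s := by
  refine ⟨fun hle => ?_, firstPassage_le_of_le_apply hs⟩
  set S := {s | s ≤ T ∧ t ≤ f s}
  have hS : IsClosed S := hcont.preimage_isClosed_of_isClosed isClosed_Iic isClosed_Ici
  have hinf : sInf S ∈ S := hS.csInf_mem ⟨T, le_rfl, ht⟩ (OrderBot.bddBelow S)
  rw [firstPassage, min_eq_left hinf.1] at hle
  exact hinf.2.trans (hmono hinf.1 hs hle)

end FirstPassage

section PastSigma

variable {Ω : Type*} {F : ℝ≥0 → MeasurableSpace Ω} {τ : Ω → ℝ≥0}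

theorem measurableSet_lt_of_measurableSet_le (hF : Monotone F)
    (hτ : ∀ u, MeasurableSet[F u] {ω | τ ω ≤ u}) (t : ℝ≥0) :
    MeasurableSet[F t] {ω | τ ω < t} := by
  have hunion :
      {ω | τ ω < t} = ⋃ (q : ℚ) (_ : Real.toNNReal q < t), {ω | τ ω ≤ Real.toNNReal q} := by
    ext ω
    simp only [mem_ofPred_eq, mem_iUnion, exists_prop]
    constructor
    · intro hτt
      obtain ⟨q, -, hτq, hqt⟩ := (NNReal.lt_iff_exists_rat_btwn _ _).1 hτt
      exact ⟨q, hqt, hτq.le⟩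
    · rintro ⟨q, hqt, hτq⟩
      exact hτq.trans_lt hqt
  rw [hunion]
  exact .iUnion fun q => .iUnion fun hqt => hF hqt.le _ (hτ _)

theorem measurableSet_le_pastSigma (hF : Monotone F)
    (hτ : ∀ u, MeasurableSet[F u] {ω | τ ω ≤ u}) (D : Set ℝ≥0) (t : ℝ≥0) :
    MeasurableSet[pastSigma F D τ] {ω | t ≤ τ ω} := by
  refine MeasurableSpace.measurableSet_generateFrom fun u _ => ?_
  rcases lt_or_ge u t with hut | htu
  · convert @MeasurableSet.empty Ω (F u)
    exact eq_empty_of_forall_notMem fun ω ⟨htτ, hτu⟩ => (htτ.trans hτu).not_gt hut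
  · have hdiff : {ω | t ≤ τ ω} ∩ {ω | τ ω ≤ u} = {ω | τ ω ≤ u} \ {ω | τ ω < t} := by
      ext ω
      simp only [mem_inter_iff, mem_sdiff, mem_ofPred_eq, not_lt]
      tauto
    rw [hdiff]
    exact (hτ u).diff (hF htu _ (measurableSet_lt_of_measurableSet_le hF hτ t))

end PastSigma

theorem timeChange_gives_informationDelay_general
    {Ω : Type*}
    (F : ℝ≥0 → MeasurableSpace Ω)
    (hFmono : Monotone F)
    (T : ℝ≥0)
    (π : ℝ≥0 → Ω → ℝ≥0)
    (hπstop : ∀ s ≤ T, ∀ u : ℝ≥0, MeasurableSet[F u] {ω | π s ω ≤ u})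
    (hπge : ∀ s ≤ T, ∀ ω, s ≤ π s ω)
    (hπmono : ∀ s u : ℝ≥0, s ≤ u → u ≤ T → ∀ ω, π s ω ≤ π u ω)
    (hπcont : ∀ ω, ContinuousOn (fun s => π s ω) (Set.Icc 0 T)) :
    (∀ t ≤ T, ∀ s ≤ T, MeasurableSet[pastSigma F Set.univ (π s)]
      {ω | min (sInf {s' : ℝ≥0 | s' ≤ T ∧ t ≤ π s' ω}) T ≤ s}) ∧
    (∀ t ≤ T, ∀ ω, min (sInf {s' : ℝ≥0 | s' ≤ T ∧ t ≤ π s' ω}) T ≤ t) ∧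
    (∀ t u : ℝ≥0, t ≤ u → u ≤ T → ∀ ω,
      min (sInf {s' : ℝ≥0 | s' ≤ T ∧ t ≤ π s' ω}) T ≤
        min (sInf {s' : ℝ≥0 | s' ≤ T ∧ u ≤ π s' ω}) T) := by
  have hreach : ∀ t ≤ T, ∀ ω, t ≤ π T ω := fun t ht ω => ht.trans (hπge T le_rfl ω)
  have hle_iff : ∀ t ≤ T, ∀ s ≤ T, ∀ ω,
      firstPassage (π · ω) T t ≤ s ↔ t ≤ π s ω := fun t ht s hs ω =>
    firstPassage_le_iff ((hπcont ω).mono fun _ h => ⟨zero_le, h⟩)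
      (fun _ _ _ hu hsu => hπmono _ _ hsu hu ω) (hreach t ht ω) hs
  refine ⟨fun t ht s hs => ?_, fun t ht ω => ?_, fun t u htu hu ω => ?_⟩
  · have hevent : {ω | firstPassage (π · ω) T t ≤ s} = {ω | t ≤ π s ω} :=
      ext fun ω => hle_iff t ht s hs ω
    exact hevent ▸ measurableSet_le_pastSigma hFmono (hπstop s hs) univ t
  · exact firstPassage_le_of_le_apply ht (hπge t ht ω)
  · exact firstPassage_mono htu (hreach u hu ω)

/-- Let `𝔽 = (𝓕_u)_{u∈ℝ₊}` be right-continuous and `π` a pathwise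
continuous order execution delay for `𝔽`.  With `𝓕̃_s := 𝓕_{π(s)}` (σ-field of the
`π(s)`-past) and `δ(t,ω) := min(inf {s ∈ [0,T] : π(s,ω) ≥ t}, T)`, the process `δ` is an
information delay for `𝔽̃`: each `δ(t)` is an `𝔽̃`-stopping time, `0 ≤ δ(t) ≤ t`, and
`δ` is pathwise monotone. -/
theorem timeChange_gives_informationDelay
    {Ω : Type*} [m𝒢 : MeasurableSpace Ω] (P : Measure Ω) [IsProbabilityMeasure P]
    (F : ℝ≥0 → MeasurableSpace Ω)
    (hFle : ∀ u, F u ≤ m𝒢) (hFmono : Monotone F)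
    (hFrc : ∀ u : ℝ≥0, F u = ⨅ v ∈ Set.Ioi u, F v)
    (T : ℝ≥0) (hT : 0 < T)
    (π : ℝ≥0 → Ω → ℝ≥0)
    (hπstop : ∀ s ≤ T, ∀ u : ℝ≥0, MeasurableSet[F u] {ω | π s ω ≤ u})
    (hπge : ∀ s ≤ T, ∀ ω, s ≤ π s ω)
    (hπmono : ∀ s u : ℝ≥0, s ≤ u → u ≤ T → ∀ ω, π s ω ≤ π u ω)
    (hπcont : ∀ ω, ContinuousOn (fun s => π s ω) (Set.Icc 0 T)) :
    (∀ t ≤ T, ∀ s ≤ T, MeasurableSet[pastSigma F Set.univ (π s)]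
      {ω | min (sInf {s' : ℝ≥0 | s' ≤ T ∧ t ≤ π s' ω}) T ≤ s}) ∧
    (∀ t ≤ T, ∀ ω, min (sInf {s' : ℝ≥0 | s' ≤ T ∧ t ≤ π s' ω}) T ≤ t) ∧
    (∀ t u : ℝ≥0, t ≤ u → u ≤ T → ∀ ω,
      min (sInf {s' : ℝ≥0 | s' ≤ T ∧ t ≤ π s' ω}) T ≤
        min (sInf {s' : ℝ≥0 | s' ≤ T ∧ u ≤ π s' ω}) T) :=
  timeChange_gives_informationDelay_general F hFmono T π hπstop hπge hπmono hπcont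

end
end
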